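/- arXiv:1805.01018 — 4 statements merged into one kernel-verified Lean document; each statement's English description precedes it below -/
import Mathlib

section
/- Let X be a bounded operator on a reproducing kernel Hilbert space with Cartesian decomposition X = H + iK where H and K are self-adjoint. Then ber(H) ≤ ber(X) ≤ sqrt(ber(H)² + ber(K)²). -/
variable {E : Type*} [NormedAddCommGroup E] [InnerProductSpace ℂ E] [CompleteSpace E] {Ω : Type*}

/-- Berezin number of `A` w.r.t. the family of normalized reproducing kernels `k`. -/
noncomputable def ber (k : Ω → E) (A : E →L[ℂ] E) : ℝ :=
  ⨆ p : Ω, ‖(inner ℂ (A (k p)) (k p) : ℂ)‖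

noncomputable def adj (A : E →L[ℂ] E) : E →L[ℂ] E := ContinuousLinearMap.adjoint A

/-- Real part `(T + T*)/2`. -/
noncomputable def reOp (T : E →L[ℂ] E) : E →L[ℂ] E := (2 : ℂ)⁻¹ • (T + adj T)

/-- Imaginary part `(T - T*)/(2i)`. -/
noncomputable def imOp (T : E →L[ℂ] E) : E →L[ℂ] E := (2 * Complex.I)⁻¹ • (T - adj T)

/-- `|X| = (X*X)^{1/2}`. -/
noncomputable def absOp (X : E →L[ℂ] E) : E →L[ℂ] E := CFC.sqrt (adj X * X)
/-! The Berezin symbols of `reOp X` and `imOp X` at `λ` are, up to sign, the real and imaginary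
parts of the Berezin symbol of `X` at `λ`; both bounds then hold pointwise in `λ`, because
`|Re z| ≤ |z| = √((Re z)² + (Im z)²)`. -/

open ComplexConjugate

lemma inner_adj_apply_self (X : E →L[ℂ] E) (v : E) :
    inner ℂ (adj X v) v = conj (inner ℂ (X v) v) := by
  rw [adj, ContinuousLinearMap.adjoint_inner_left, inner_conj_symm]

lemma inner_reOp_apply_self (X : E →L[ℂ] E) (v : E) :
    inner ℂ (reOp X v) v = ((inner ℂ (X v) v).re : ℂ) := by
  simp only [reOp, smul_apply, add_apply,
    inner_smul_left, inner_add_left, inner_adj_apply_self, Complex.add_conj, map_inv₀, map_ofNat]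
  push_cast
  ring

lemma inner_imOp_apply_self (X : E →L[ℂ] E) (v : E) :
    inner ℂ (imOp X v) v = -((inner ℂ (X v) v).im : ℂ) := by
  simp only [imOp, smul_apply, sub_apply,
    inner_smul_left, inner_sub_left, inner_adj_apply_self, Complex.sub_conj, map_inv₀, map_mul,
    map_ofNat, Complex.conj_I]
  field_simp
  push_cast
  ring

lemma norm_inner_reOp_apply_self (X : E →L[ℂ] E) (v : E) :
    ‖inner ℂ (reOp X v) v‖ = |(inner ℂ (X v) v).re| := by
  rw [inner_reOp_apply_self, Complex.norm_real, Real.norm_eq_abs]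

lemma norm_inner_imOp_apply_self (X : E →L[ℂ] E) (v : E) :
    ‖inner ℂ (imOp X v) v‖ = |(inner ℂ (X v) v).im| := by
  rw [inner_imOp_apply_self, norm_neg, Complex.norm_real, Real.norm_eq_abs]

omit [CompleteSpace E] in
lemma norm_inner_apply_self_le_opNorm (A : E →L[ℂ] E) {v : E} (hv : ‖v‖ ≤ 1) :
    ‖inner ℂ (A v) v‖ ≤ ‖A‖ :=
  calc ‖inner ℂ (A v) v‖ ≤ ‖A v‖ * ‖v‖ := norm_inner_le_norm _ _
    _ ≤ ‖A‖ * ‖v‖ * ‖v‖ := by gcongr; exact A.le_opNorm v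
    _ ≤ ‖A‖ * 1 * 1 := by gcongr
    _ = ‖A‖ := by ring

omit [CompleteSpace E] in
lemma ber_nonneg (k : Ω → E) (A : E →L[ℂ] E) : 0 ≤ ber k A :=
  Real.iSup_nonneg fun _ ↦ norm_nonneg _

omit [CompleteSpace E] in
lemma norm_inner_le_ber {k : Ω → E} (hk : ∀ p, ‖k p‖ ≤ 1) (A : E →L[ℂ] E) (p : Ω) :
    ‖inner ℂ (A (k p)) (k p)‖ ≤ ber k A :=
  le_ciSup (f := fun p ↦ ‖inner ℂ (A (k p)) (k p)‖)
    ⟨‖A‖, by rintro _ ⟨q, rfl⟩; exact norm_inner_apply_self_le_opNorm A (hk q)⟩ p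

lemma Complex.norm_le_sqrt_sq_add_sq {z : ℂ} {a b : ℝ} (ha : |z.re| ≤ a) (hb : |z.im| ≤ b) :
    ‖z‖ ≤ √(a ^ 2 + b ^ 2) := by
  rw [Complex.norm_eq_sqrt_sq_add_sq, ← sq_abs z.re, ← sq_abs z.im]
  gcongr

theorem stmt1 (k : Ω → E) (hk : ∀ p, ‖k p‖ = 1) (X : E →L[ℂ] E) :
    ber k (reOp X) ≤ ber k X ∧
    ber k X ≤ Real.sqrt ((ber k (reOp X)) ^ 2 + (ber k (imOp X)) ^ 2) := by
  have hk' : ∀ p, ‖k p‖ ≤ 1 := fun p ↦ (hk p).le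
  constructor
  · refine Real.iSup_le (fun p ↦ ?_) (ber_nonneg k X)
    rw [norm_inner_reOp_apply_self]
    exact (Complex.abs_re_le_norm _).trans (norm_inner_le_ber hk' X p)
  · refine Real.iSup_le (fun p ↦ Complex.norm_le_sqrt_sq_add_sq ?_ ?_) (Real.sqrt_nonneg _)
    · rw [← norm_inner_reOp_apply_self]
      exact norm_inner_le_ber hk' (reOp X) p
    · rw [← norm_inner_imOp_apply_self]
      exact norm_inner_le_ber hk' (imOp X) p
end

section
/- Let A, X be bounded operators on a reproducing kernel Hilbert space with Cartesian decomposition X = H + iK satisfying HK + KH = 0. Then ber(AX ± XA*) ≤ 2‖A‖ · max(ber(H²)^{1/2}, ber(K²)^{1/2}). -/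
variable {E : Type*} [NormedAddCommGroup E] [InnerProductSpace ℂ E] [CompleteSpace E] {Ω : Type*}

/-!
Fix a unit vector `x` and put `u = H x`, `v = K x`, `f = A* x`. Expanding `X = H + iK` gives
`⟪(AX + XA*) x, x⟫ = 2 Re⟪u, f⟫ - 2i Re⟪v, f⟫`. The relation `HK + KH = 0` says exactly that `u` and
`v` are orthogonal for the real inner product `Re⟪·, ·⟫`, so a two-term Bessel inequality bounds
`Re⟪u, f⟫² + Re⟪v, f⟫²` by `max(‖u‖, ‖v‖)² ‖f‖²`, while `‖u‖² = ⟪H² x, x⟫ ≤ ber(H²)` and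
`‖v‖² ≤ ber(K²)`. The minus sign reduces to the plus sign via `AX - XA* = -i((iA)X + X(iA)*)`.
-/

open Complex ContinuousLinearMap
open scoped ComplexStarModule

lemma real_inner_sq_add_real_inner_sq_le {F : Type*} [NormedAddCommGroup F]
    [InnerProductSpace ℝ F] {u v : F} (huv : inner ℝ u v = 0) (f : F) :
    inner ℝ u f ^ 2 + inner ℝ v f ^ 2 ≤ (max ‖u‖ ‖v‖ * ‖f‖) ^ 2 := by
  set c := inner ℝ u f
  set d := inner ℝ v f
  set m := max ‖u‖ ‖v‖
  -- `w = c • u + d • v` has `c² + d² = ⟪w, f⟫ ≤ ‖w‖ ‖f‖` and, by orthogonality,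
  -- `‖w‖² ≤ m² (c² + d²)`.
  have hw : ‖c • u + d • v‖ ^ 2 ≤ m ^ 2 * (c ^ 2 + d ^ 2) := by
    rw [norm_add_sq_real, real_inner_smul_left, real_inner_smul_right, huv,
      norm_smul, norm_smul, mul_pow, mul_pow, Real.norm_eq_abs, Real.norm_eq_abs, sq_abs, sq_abs]
    have hu : ‖u‖ ^ 2 ≤ m ^ 2 := pow_le_pow_left₀ (norm_nonneg _) (le_max_left _ _) 2
    have hv : ‖v‖ ^ 2 ≤ m ^ 2 := pow_le_pow_left₀ (norm_nonneg _) (le_max_right _ _) 2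
    nlinarith [mul_le_mul_of_nonneg_left hu (sq_nonneg c),
      mul_le_mul_of_nonneg_left hv (sq_nonneg d)]
  have hS : c ^ 2 + d ^ 2 ≤ ‖c • u + d • v‖ * ‖f‖ := by
    calc c ^ 2 + d ^ 2 = inner ℝ (c • u + d • v) f := by
          simp only [inner_add_left, real_inner_smul_left]; ring
      _ ≤ _ := real_inner_le_norm _ _
  rcases (add_nonneg (sq_nonneg c) (sq_nonneg d)).eq_or_lt with hS0 | hS0
  · rw [← hS0]; positivity
  refine le_of_mul_le_mul_left ?_ hS0
  calc (c ^ 2 + d ^ 2) * (c ^ 2 + d ^ 2) ≤ ‖c • u + d • v‖ ^ 2 * ‖f‖ ^ 2 := by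
        rw [← mul_pow, sq (_ * _)]; exact mul_self_le_mul_self hS0.le hS
    _ ≤ m ^ 2 * (c ^ 2 + d ^ 2) * ‖f‖ ^ 2 := by gcongr
    _ = (c ^ 2 + d ^ 2) * (m * ‖f‖) ^ 2 := by ring

lemma reOp_eq_realPart (X : E →L[ℂ] E) : reOp X = ℜ X := by
  rw [realPart_apply_coe, reOp, adj, ← star_eq_adjoint, ← Complex.coe_smul]
  norm_num

lemma imOp_eq_imaginaryPart (X : E →L[ℂ] E) : imOp X = ℑ X := by
  rw [imaginaryPart_apply_coe, imOp, adj, ← star_eq_adjoint, ← Complex.coe_smul, smul_smul]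
  norm_num [Complex.ext_iff]

lemma isSelfAdjoint_reOp (X : E →L[ℂ] E) : IsSelfAdjoint (reOp X) :=
  reOp_eq_realPart X ▸ (ℜ X).2

lemma isSelfAdjoint_imOp (X : E →L[ℂ] E) : IsSelfAdjoint (imOp X) :=
  imOp_eq_imaginaryPart X ▸ (ℑ X).2

lemma reOp_add_I_smul_imOp (X : E →L[ℂ] E) : reOp X + I • imOp X = X := by
  rw [reOp_eq_realPart, imOp_eq_imaginaryPart, realPart_add_I_smul_imaginaryPart]

lemma re_inner_apply_apply_eq_zero_of_anticommute {H K : E →L[ℂ] E} (hH : IsSelfAdjoint H)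
    (hK : IsSelfAdjoint K) (hHK : H * K + K * H = 0) (x : E) : re (inner ℂ (H x) (K x)) = 0 := by
  have h2 : 2 * re (inner ℂ (H x) (K x)) = re (inner ℂ x ((H * K + K * H) x)) := by
    have hHsymm : inner ℂ (H x) (K x) = inner ℂ x (H (K x)) := hH.isSymmetric x (K x)
    have hKsymm : inner ℂ (K x) (H x) = inner ℂ x (K (H x)) := hK.isSymmetric x (H x)
    rw [add_apply, inner_add_right, add_re, mul_apply_eq_comp, mul_apply_eq_comp,
      ← hHsymm, ← hKsymm, ← inner_conj_symm (K x) (H x), conj_re]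
    ring
  simpa [hHK] using h2

lemma inner_mul_add_mul_adjoint_apply {H K : E →L[ℂ] E} (hH : IsSelfAdjoint H)
    (hK : IsSelfAdjoint K) (A : E →L[ℂ] E) (x : E) :
    inner ℂ ((A * (H + I • K) + (H + I • K) * adjoint A) x) x =
      ((2 * re (inner ℂ (H x) (adjoint A x)) : ℝ) : ℂ) +
        ((-2 * re (inner ℂ (K x) (adjoint A x)) : ℝ) : ℂ) * I := by
  have hstar : adjoint (H + I • K) = H - I • K := by
    rw [← star_eq_adjoint, star_add, star_smul, hH.star_eq, hK.star_eq]
    simp [sub_eq_add_neg]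
  rw [add_apply, inner_add_left, mul_apply_eq_comp, mul_apply_eq_comp, ← adjoint_inner_right A,
    ← adjoint_inner_right (H + I • K) (adjoint A x) x, hstar]
  simp only [add_apply, sub_apply, smul_apply, inner_add_left, inner_sub_right, inner_smul_left,
    inner_smul_right, conj_I]
  rw [← inner_conj_symm (adjoint A x) (H x), ← inner_conj_symm (adjoint A x) (K x)]
  apply Complex.ext <;> simp only [add_re, add_im, sub_re, sub_im, mul_re, mul_im, I_re, I_im,
    neg_re, neg_im, conj_re, conj_im, ofReal_re, ofReal_im] <;> ring

lemma norm_inner_mul_add_mul_adjoint_apply_le {H K : E →L[ℂ] E} (hH : IsSelfAdjoint H)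
    (hK : IsSelfAdjoint K) (hHK : H * K + K * H = 0) (A : E →L[ℂ] E) (x : E) :
    ‖inner ℂ ((A * (H + I • K) + (H + I • K) * adjoint A) x) x‖ ≤
      2 * (max ‖H x‖ ‖K x‖ * ‖adjoint A x‖) := by
  let _ : InnerProductSpace ℝ E := InnerProductSpace.complexToReal
  have hbessel := real_inner_sq_add_real_inner_sq_le
    (re_inner_apply_apply_eq_zero_of_anticommute hH hK hHK x) (adjoint A x)
  rw [inner_mul_add_mul_adjoint_apply hH hK, norm_add_mul_I]
  calc √((2 * re (inner ℂ (H x) (adjoint A x))) ^ 2 + (-2 * re (inner ℂ (K x) (adjoint A x))) ^ 2)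
      = 2 * √(inner ℝ (H x) (adjoint A x) ^ 2 + inner ℝ (K x) (adjoint A x) ^ 2) := by
        rw [← Real.sqrt_sq (zero_le_two : (0:ℝ) ≤ 2), ← Real.sqrt_mul (by positivity)]
        congr 1
        simp only [real_inner_eq_re_inner, RCLike.re_to_complex]
        ring
    _ ≤ 2 * (max ‖H x‖ ‖K x‖ * ‖adjoint A x‖) := by
        gcongr
        exact (Real.sqrt_le_left (by positivity)).mpr hbessel

section Berezin

variable {F : Type*} [NormedAddCommGroup F] [InnerProductSpace ℂ F]

lemma bddAbove_range_norm_inner_apply {k : Ω → F} (hk : ∀ p, ‖k p‖ = 1) (T : F →L[ℂ] F) :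
    BddAbove (Set.range fun p => ‖inner ℂ (T (k p)) (k p)‖) := by
  refine ⟨‖T‖, ?_⟩
  rintro _ ⟨p, rfl⟩
  calc ‖inner ℂ (T (k p)) (k p)‖ ≤ ‖T (k p)‖ * ‖k p‖ := norm_inner_le_norm _ _
    _ ≤ ‖T‖ * ‖k p‖ * ‖k p‖ := by gcongr; exact T.le_opNorm _
    _ = ‖T‖ := by rw [hk p, mul_one, mul_one]

lemma ber_smul (k : Ω → F) (c : ℂ) (T : F →L[ℂ] F) : ber k (c • T) = ‖c‖ * ber k T := by
  simp only [ber, smul_apply, inner_smul_left, norm_mul, RCLike.norm_conj]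
  exact (Real.mul_iSup_of_nonneg (norm_nonneg c) _).symm

end Berezin

lemma norm_apply_le_sqrt_ber {k : Ω → E} (hk : ∀ p, ‖k p‖ = 1) {T : E →L[ℂ] E}
    (hT : IsSelfAdjoint T) (p : Ω) : ‖T (k p)‖ ≤ √(ber k (T * T)) := by
  refine Real.le_sqrt_of_sq_le ?_
  have hsymm : inner ℂ (T (T (k p))) (k p) = inner ℂ (T (k p)) (T (k p)) := hT.isSymmetric _ _
  have hsq : ‖inner ℂ ((T * T) (k p)) (k p)‖ = ‖T (k p)‖ ^ 2 := by
    rw [mul_apply_eq_comp, hsymm, ← inner_self_re_eq_norm, inner_self_eq_norm_sq]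
  exact hsq ▸ le_ciSup (bddAbove_range_norm_inner_apply hk (T * T)) p

lemma ber_mul_add_mul_adj_le {k : Ω → E} (hk : ∀ p, ‖k p‖ = 1) (A X : E →L[ℂ] E)
    (h : reOp X * imOp X + imOp X * reOp X = 0) :
    ber k (A * X + X * adj A) ≤
      2 * ‖A‖ * max √(ber k (reOp X * reOp X)) √(ber k (imOp X * imOp X)) := by
  have hH := isSelfAdjoint_reOp X
  have hK := isSelfAdjoint_imOp X
  have hX := reOp_add_I_smul_imOp X
  generalize reOp X = H at *
  generalize imOp X = K at *
  subst hX
  refine Real.iSup_le (fun p => ?_) (by positivity)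
  calc ‖inner ℂ ((A * (H + I • K) + (H + I • K) * adjoint A) (k p)) (k p)‖
      ≤ 2 * (max ‖H (k p)‖ ‖K (k p)‖ * ‖adjoint A (k p)‖) :=
        norm_inner_mul_add_mul_adjoint_apply_le hH hK h A (k p)
    _ ≤ 2 * (max √(ber k (H * H)) √(ber k (K * K)) * ‖A‖) := by
        gcongr
        · exact norm_apply_le_sqrt_ber hk hH p
        · exact norm_apply_le_sqrt_ber hk hK p
        · simpa [hk p] using (adjoint A).le_opNorm (k p)
    _ = _ := by ring

theorem stmt3 (k : Ω → E) (hk : ∀ p, ‖k p‖ = 1) (A X : E →L[ℂ] E)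
    (h : reOp X * imOp X + imOp X * reOp X = 0) :
    ber k (A * X + X * adj A) ≤
      2 * ‖A‖ * max (Real.sqrt (ber k (reOp X * reOp X))) (Real.sqrt (ber k (imOp X * imOp X))) ∧
    ber k (A * X - X * adj A) ≤
      2 * ‖A‖ * max (Real.sqrt (ber k (reOp X * reOp X))) (Real.sqrt (ber k (imOp X * imOp X))) := by
  refine ⟨ber_mul_add_mul_adj_le hk A X h, ?_⟩
  have hsub : A * X - X * adj A = (-I) • ((I • A) * X + X * adj (I • A)) := by
    simp only [adj, map_smulₛₗ, conj_I, smul_mul_assoc, mul_smul_comm, smul_add, smul_smul]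
    simp [sub_eq_add_neg]
  rw [hsub, ber_smul, norm_neg, norm_I, one_mul]
  simpa [norm_smul] using ber_mul_add_mul_adj_le hk (I • A) X h
end

section
/- For bounded operators A, X on a reproducing kernel Hilbert space, ber(AX ± XA) ≤ ber(A*A + AA*)^{1/2} · ber(X*X + XX*)^{1/2}. -/
variable {E : Type*} [NormedAddCommGroup E] [InnerProductSpace ℂ E] [CompleteSpace E] {Ω : Type*}

/-!
At a kernel `u = k p` we have `⟪(AX ± XA) u, u⟫ = ⟪X u, A* u⟫ ± ⟪A u, X* u⟫`, whose modulus is at most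
`‖X u‖ ‖A* u‖ + ‖A u‖ ‖X* u‖ ≤ (‖A u‖² + ‖A* u‖²)^{1/2} (‖X u‖² + ‖X* u‖²)^{1/2}` by Cauchy–Schwarz twice;
and `‖A u‖² + ‖A* u‖² = ⟪(A*A + AA*) u, u⟫` is bounded by the Berezin number of `A*A + AA*`.
-/

open ContinuousLinearMap

omit [CompleteSpace E] in
lemma norm_inner_apply_le_ber {k : Ω → E} (hk : ∀ p, ‖k p‖ ≤ 1) (T : E →L[ℂ] E) (p : Ω) :
    ‖(inner ℂ (T (k p)) (k p) : ℂ)‖ ≤ ber k T := by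
  refine le_ciSup (f := fun q => ‖(inner ℂ (T (k q)) (k q) : ℂ)‖) ⟨‖T‖, ?_⟩ p
  rintro _ ⟨q, rfl⟩
  calc ‖(inner ℂ (T (k q)) (k q) : ℂ)‖ ≤ ‖T (k q)‖ * ‖k q‖ := norm_inner_le_norm _ _
    _ ≤ ‖T‖ * ‖k q‖ * ‖k q‖ := by gcongr; exact T.le_opNorm _
    _ ≤ ‖T‖ * 1 * 1 := by gcongr <;> exact hk q
    _ = ‖T‖ := by ring

omit [CompleteSpace E] in
lemma ber_le {k : Ω → E} {T : E →L[ℂ] E} {c : ℝ} (hc : 0 ≤ c)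
    (h : ∀ p, ‖(inner ℂ (T (k p)) (k p) : ℂ)‖ ≤ c) : ber k T ≤ c :=
  Real.iSup_le h hc

lemma inner_adj_mul_self_add_mul_adj_apply (A : E →L[ℂ] E) (u : E) :
    (inner ℂ ((adj A * A + A * adj A) u) u : ℂ) = ((‖A u‖ ^ 2 + ‖adj A u‖ ^ 2 : ℝ) : ℂ) := by
  simp only [add_apply, mul_apply_eq_comp, inner_add_left, adj, adjoint_inner_left,
    inner_self_eq_norm_sq_to_K]
  rw [← adjoint_inner_right, inner_self_eq_norm_sq_to_K]
  push_cast
  rfl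

lemma sq_norm_apply_add_sq_norm_adj_apply_le_ber {k : Ω → E} (hk : ∀ p, ‖k p‖ ≤ 1)
    (A : E →L[ℂ] E) (p : Ω) :
    ‖A (k p)‖ ^ 2 + ‖adj A (k p)‖ ^ 2 ≤ ber k (adj A * A + A * adj A) := by
  have h := norm_inner_apply_le_ber hk (adj A * A + A * adj A) p
  rwa [inner_adj_mul_self_add_mul_adj_apply, Complex.norm_real,
    Real.norm_of_nonneg (by positivity)] at h

lemma norm_inner_mul_apply_le (A X : E →L[ℂ] E) (u : E) :
    ‖(inner ℂ ((A * X) u) u : ℂ)‖ ≤ ‖X u‖ * ‖adj A u‖ := by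
  rw [mul_apply_eq_comp, adj, ← adjoint_inner_right]
  exact norm_inner_le_norm _ _

lemma norm_inner_mul_apply_add_norm_inner_mul_apply_le (A X : E →L[ℂ] E) (u : E) :
    ‖(inner ℂ ((A * X) u) u : ℂ)‖ + ‖(inner ℂ ((X * A) u) u : ℂ)‖ ≤
      √(‖A u‖ ^ 2 + ‖adj A u‖ ^ 2) * √(‖X u‖ ^ 2 + ‖adj X u‖ ^ 2) := by
  have cauchySchwarz := Real.sum_mul_le_sqrt_mul_sqrt Finset.univ
    ![‖A u‖, ‖adj A u‖] ![‖adj X u‖, ‖X u‖]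
  simp only [Fin.sum_univ_two, Matrix.cons_val_zero, Matrix.cons_val_one] at cauchySchwarz
  calc _ ≤ ‖X u‖ * ‖adj A u‖ + ‖A u‖ * ‖adj X u‖ :=
        add_le_add (norm_inner_mul_apply_le A X u) (norm_inner_mul_apply_le X A u)
    _ = ‖A u‖ * ‖adj X u‖ + ‖adj A u‖ * ‖X u‖ := by ring
    _ ≤ _ := by rwa [add_comm (‖X u‖ ^ 2)]

theorem stmt6 (k : Ω → E) (hk : ∀ p, ‖k p‖ = 1) (A X : E →L[ℂ] E) :
    ber k (A * X + X * A) ≤ Real.sqrt (ber k (adj A * A + A * adj A)) * Real.sqrt (ber k (adj X * X + X * adj X)) ∧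
    ber k (A * X - X * A) ≤ Real.sqrt (ber k (adj A * A + A * adj A)) * Real.sqrt (ber k (adj X * X + X * adj X)) := by
  have hk_le : ∀ p, ‖k p‖ ≤ 1 := fun p => (hk p).le
  have bound : ∀ p, ‖(inner ℂ ((A * X) (k p)) (k p) : ℂ)‖ + ‖(inner ℂ ((X * A) (k p)) (k p) : ℂ)‖ ≤
      √(ber k (adj A * A + A * adj A)) * √(ber k (adj X * X + X * adj X)) := fun p =>
    (norm_inner_mul_apply_add_norm_inner_mul_apply_le A X (k p)).trans <| by
      gcongr <;> exact sq_norm_apply_add_sq_norm_adj_apply_le_ber hk_le _ p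
  refine ⟨ber_le (by positivity) fun p => ?_, ber_le (by positivity) fun p => ?_⟩
  · rw [add_apply, inner_add_left]
    exact (norm_add_le _ _).trans (bound p)
  · rw [sub_apply, inner_sub_left]
    exact (norm_sub_le _ _).trans (bound p)
end

section
/- Let A, B be bounded operators on a reproducing kernel Hilbert space H(Ω) with Ω ⊆ 𝔻 the unit disk. Suppose limsup_{λ→ξ₀} ‖(A − Ã(λ))* k̂_λ‖ = 0 for some boundary point ξ₀ ∈ ∂𝔻. Then limsup_{λ→ξ₀} |(AB)~(λ)| ≤ ber(A)·ber(B). In particular, if limsup_{λ→ξ₀} |(AB)~(λ)| = ber(AB), then ber(AB) ≤ ber(A)·ber(B). -/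
variable {E : Type*} [NormedAddCommGroup E] [InnerProductSpace ℂ E] [CompleteSpace E] {Ω : Type*}

/-! Since `(AB)~(λ) = ⟨B k̂_λ, A* k̂_λ⟩` and `A* k̂_λ = (A - Ã(λ))* k̂_λ + conj Ã(λ) • k̂_λ`,
`|(AB)~(λ)| ≤ ber(A) ber(B) + ‖B‖ ‖(A - Ã(λ))* k̂_λ‖`. The last factor is bounded by `2‖A‖`, so its
vanishing limsup at `ξ₀` makes it tend to `0` there, and the bound passes to the limsup. -/

open Filter Topology ComplexConjugate

lemma norm_inner_apply_self_le_opNorm_s18 {𝕜 F : Type*} [RCLike 𝕜] [NormedAddCommGroup F]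
    [InnerProductSpace 𝕜 F] (A : F →L[𝕜] F) {x : F} (hx : ‖x‖ = 1) :
    ‖(inner 𝕜 (A x) x : 𝕜)‖ ≤ ‖A‖ :=
  calc ‖(inner 𝕜 (A x) x : 𝕜)‖ ≤ ‖A x‖ * ‖x‖ := norm_inner_le_norm _ _
    _ ≤ ‖A‖ := by simpa [hx] using A.le_opNorm x

lemma ber_nonneg_s18 {F ι : Type*} [NormedAddCommGroup F] [InnerProductSpace ℂ F] (k : ι → F)
    (A : F →L[ℂ] F) : 0 ≤ ber k A :=
  Real.iSup_nonneg fun _ => norm_nonneg _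

lemma norm_inner_apply_le_ber_s18 {F ι : Type*} [NormedAddCommGroup F] [InnerProductSpace ℂ F]
    (k : ι → F) (hk : ∀ p, ‖k p‖ = 1) (A : F →L[ℂ] F) (p : ι) :
    ‖(inner ℂ (A (k p)) (k p) : ℂ)‖ ≤ ber k A :=
  le_ciSup (f := fun p => ‖(inner ℂ (A (k p)) (k p) : ℂ)‖)
    ⟨‖A‖, by rintro _ ⟨q, rfl⟩; exact norm_inner_apply_self_le_opNorm_s18 A (hk q)⟩ p

lemma adj_sub_smul_one (A : E →L[ℂ] E) (a : ℂ) : adj (A - a • 1) = adj A - conj a • 1 := by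
  simp only [adj, ← ContinuousLinearMap.star_eq_adjoint, star_sub, star_smul, star_one,
    Complex.star_def]

lemma inner_mul_apply_self_eq (A B : E →L[ℂ] E) (x : E) (a : ℂ) :
    (inner ℂ ((A * B) x) x : ℂ) = inner ℂ (B x) (adj (A - a • 1) x) + conj a * inner ℂ (B x) x := by
  rw [adj_sub_smul_one, mul_apply_eq_comp, ← ContinuousLinearMap.adjoint_inner_right]
  simp [adj]

lemma norm_adj_sub_inner_smul_one_apply_le (A : E →L[ℂ] E) {x : E} (hx : ‖x‖ = 1) :
    ‖adj (A - (inner ℂ (A x) x : ℂ) • 1) x‖ ≤ 2 * ‖A‖ :=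
  calc ‖adj (A - (inner ℂ (A x) x : ℂ) • 1) x‖ ≤ ‖A - (inner ℂ (A x) x : ℂ) • 1‖ := by
        simpa only [hx, mul_one, adj, LinearIsometryEquiv.norm_map] using
          (adj (A - (inner ℂ (A x) x : ℂ) • 1)).le_opNorm x
    _ ≤ ‖A‖ + ‖(inner ℂ (A x) x : ℂ)‖ * ‖(1 : E →L[ℂ] E)‖ := (norm_sub_le _ _).trans_eq
        (by rw [norm_smul])
    _ ≤ ‖A‖ + ‖A‖ * 1 := by
        gcongr
        exacts [norm_inner_apply_self_le_opNorm_s18 A hx, ContinuousLinearMap.norm_id_le]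
    _ = 2 * ‖A‖ := by ring

lemma norm_inner_mul_apply_self_le (A B : E →L[ℂ] E) {x : E} (hx : ‖x‖ = 1) :
    ‖(inner ℂ ((A * B) x) x : ℂ)‖ ≤ ‖(inner ℂ (A x) x : ℂ)‖ * ‖(inner ℂ (B x) x : ℂ)‖
      + ‖B‖ * ‖adj (A - (inner ℂ (A x) x : ℂ) • 1) x‖ := by
  rw [inner_mul_apply_self_eq A B x (inner ℂ (A x) x), add_comm]
  refine (norm_add_le _ _).trans (add_le_add (by rw [norm_mul, Complex.norm_conj]) ?_)
  calc _ ≤ ‖B x‖ * ‖adj (A - (inner ℂ (A x) x : ℂ) • 1) x‖ := norm_inner_le_norm _ _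
    _ ≤ _ := by gcongr; simpa [hx] using B.le_opNorm x

lemma Filter.tendsto_zero_of_limsup_eq_zero {α : Type*} {l : Filter α} {f : α → ℝ}
    (hf : 0 ≤ f) (hb : l.IsBoundedUnder (· ≤ ·) f) (h : limsup f l = 0) :
    Tendsto f l (𝓝 0) := by
  rw [Metric.tendsto_nhds]
  intro ε hε
  filter_upwards [eventually_lt_of_limsup_lt (h ▸ hε) hb] with p hp
  rwa [Real.dist_eq, sub_zero, abs_of_nonneg (hf p)]

lemma Filter.limsup_le_of_le_add_mul {α : Type*} {l : Filter α} {f g : α → ℝ} {c M : ℝ}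
    (hc : 0 ≤ c) (hg : 0 ≤ g) (hf : Tendsto f l (𝓝 0)) (h : ∀ p, g p ≤ c + M * f p) :
    limsup g l ≤ c := by
  rcases eq_or_neBot l with rfl | hl
  -- in `ℝ` the limsup along `⊥` is the junk value `sInf univ = 0`
  · simpa [limsup_eq, Real.sInf_of_not_bddBelow not_bddBelow_univ] using hc
  have hbound : Tendsto (fun p => c + M * f p) l (𝓝 c) := by
    simpa using tendsto_const_nhds.add (hf.const_mul M)
  calc limsup g l ≤ limsup (fun p => c + M * f p) l :=
        limsup_le_limsup (.of_forall h) (isCoboundedUnder_le_of_le l hg)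
          hbound.isBoundedUnder_le
    _ = c := hbound.limsup_eq

theorem stmt18_general (S : Set ℂ)
    (k : S → E) (hk : ∀ p, ‖k p‖ = 1) (A B : E →L[ℂ] E)
    (ξ₀ : ℂ)
    (hA : Filter.limsup
        (fun p : S => ‖(adj (A - (inner ℂ (A (k p)) (k p) : ℂ) • 1)) (k p)‖)
        (Filter.comap (fun p : S => (p : ℂ)) (nhds ξ₀)) = 0) :
    Filter.limsup (fun p : S => ‖(inner ℂ ((A * B) (k p)) (k p) : ℂ)‖)
        (Filter.comap (fun p : S => (p : ℂ)) (nhds ξ₀)) ≤ ber k A * ber k B ∧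
    (Filter.limsup (fun p : S => ‖(inner ℂ ((A * B) (k p)) (k p) : ℂ)‖)
        (Filter.comap (fun p : S => (p : ℂ)) (nhds ξ₀)) = ber k (A * B) →
      ber k (A * B) ≤ ber k A * ber k B) := by
  have hdeviation : Tendsto (fun p : S => ‖(adj (A - (inner ℂ (A (k p)) (k p) : ℂ) • 1)) (k p)‖)
      (comap (fun p : S => (p : ℂ)) (𝓝 ξ₀)) (𝓝 0) :=
    tendsto_zero_of_limsup_eq_zero (fun _ => norm_nonneg _)
      (isBoundedUnder_of ⟨2 * ‖A‖, fun p => norm_adj_sub_inner_smul_one_apply_le A (hk p)⟩) hA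
  have hbound : ∀ p, ‖(inner ℂ ((A * B) (k p)) (k p) : ℂ)‖
      ≤ ber k A * ber k B + ‖B‖ * ‖(adj (A - (inner ℂ (A (k p)) (k p) : ℂ) • 1)) (k p)‖ :=
    fun p => (norm_inner_mul_apply_self_le A B (hk p)).trans <| add_le_add_left
      (mul_le_mul (norm_inner_apply_le_ber_s18 k hk A p) (norm_inner_apply_le_ber_s18 k hk B p)
        (norm_nonneg _) (ber_nonneg_s18 k A)) _
  have hlimsup := limsup_le_of_le_add_mul (mul_nonneg (ber_nonneg_s18 k A) (ber_nonneg_s18 k B))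
    (fun _ => norm_nonneg _) hdeviation hbound
  exact ⟨hlimsup, fun h => h ▸ hlimsup⟩

theorem stmt18 (S : Set ℂ) (hS : S ⊆ Metric.ball (0 : ℂ) 1)
    (k : S → E) (hk : ∀ p, ‖k p‖ = 1) (A B : E →L[ℂ] E)
    (ξ₀ : ℂ) (hξ₀ : ξ₀ ∈ Metric.sphere (0 : ℂ) 1)
    (hA : Filter.limsup
        (fun p : S => ‖(adj (A - (inner ℂ (A (k p)) (k p) : ℂ) • 1)) (k p)‖)
        (Filter.comap (fun p : S => (p : ℂ)) (nhds ξ₀)) = 0) :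
    Filter.limsup (fun p : S => ‖(inner ℂ ((A * B) (k p)) (k p) : ℂ)‖)
        (Filter.comap (fun p : S => (p : ℂ)) (nhds ξ₀)) ≤ ber k A * ber k B ∧
    (Filter.limsup (fun p : S => ‖(inner ℂ ((A * B) (k p)) (k p) : ℂ)‖)
        (Filter.comap (fun p : S => (p : ℂ)) (nhds ξ₀)) = ber k (A * B) →
      ber k (A * B) ≤ ber k A * ber k B) :=
  stmt18_general S k hk A B ξ₀ hA
end
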